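/- Let w : ℝ → ℝ be continuously differentiable and 1-periodic. Then for every x ∈ ℝ, |∫_0^1 K(y) w'(x - y) dy| ≤ (∫_0^1 w(y)² dy)^{1/2}, where K(y) = (e^y + e^{1-y})/(2(e-1)) for y ∈ [0,1). -/

import Mathlib

/-!
Integrate by parts: since `K 0 = K 1` and `w` is 1-periodic, the boundary terms cancel and the
integral becomes `∫₀¹ K'(y) w(x - y) dy`. On `[0, 1]` both `e^y` and `e^{1-y}` lie in `[1, e]`,
so `|K'| ≤ 1/2`; Cauchy–Schwarz and the translation invariance of `∫ w²` over a period
finish.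
-/

open MeasureTheory Set Real

theorem abs_integral_mul_le_sqrt_mul_sqrt {α : Type*} [MeasurableSpace α] {μ : Measure α}
    {f g : α → ℝ} (hf : MemLp f 2 μ) (hg : MemLp g 2 μ) :
    |∫ a, f a * g a ∂μ| ≤ √(∫ a, f a ^ 2 ∂μ) * √(∫ a, g a ^ 2 ∂μ) := by
  have hnorm_rpow (h : α → ℝ) :
      (∫ a, ‖h a‖ ^ (2 : ℝ) ∂μ) ^ (1 / (2 : ℝ)) = √(∫ a, h a ^ 2 ∂μ) := by
    simp only [sqrt_eq_rpow, rpow_two, norm_eq_abs, sq_abs]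
  calc |∫ a, f a * g a ∂μ| ≤ ∫ a, ‖f a‖ * ‖g a‖ ∂μ := by
        simpa only [norm_mul, norm_eq_abs] using
          norm_integral_le_integral_norm (fun a ↦ f a * g a)
    _ ≤ (∫ a, ‖f a‖ ^ (2 : ℝ) ∂μ) ^ (1 / (2 : ℝ)) *
          (∫ a, ‖g a‖ ^ (2 : ℝ) ∂μ) ^ (1 / (2 : ℝ)) :=
        integral_mul_norm_le_Lp_mul_Lq HolderConjugate.two_two (by simpa using hf)
          (by simpa using hg)
    _ = √(∫ a, f a ^ 2 ∂μ) * √(∫ a, g a ^ 2 ∂μ) := by rw [hnorm_rpow, hnorm_rpow]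

theorem ContinuousOn.memLp_restrict_Ioc {f : ℝ → ℝ} {a b : ℝ}
    (hf : ContinuousOn f (Icc a b)) (p : ENNReal) : MemLp f p (volume.restrict (Ioc a b)) := by
  obtain ⟨C, hC⟩ := isCompact_Icc.exists_bound_of_continuousOn hf
  exact .of_bound ((hf.mono Ioc_subset_Icc_self).aestronglyMeasurable measurableSet_Ioc) C
    ((ae_restrict_iff' measurableSet_Ioc).2 (.of_forall fun y hy ↦ hC y (Ioc_subset_Icc_self hy)))

theorem abs_intervalIntegral_mul_le_sqrt_mul_sqrt {f g : ℝ → ℝ} {a b : ℝ} (hab : a ≤ b)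
    (hf : ContinuousOn f (Icc a b)) (hg : ContinuousOn g (Icc a b)) :
    |∫ y in a..b, f y * g y| ≤ √(∫ y in a..b, f y ^ 2) * √(∫ y in a..b, g y ^ 2) := by
  simp only [intervalIntegral.integral_of_le hab]
  exact abs_integral_mul_le_sqrt_mul_sqrt (hf.memLp_restrict_Ioc 2) (hg.memLp_restrict_Ioc 2)

namespace Function.Periodic

variable {v : ℝ → ℝ} {T : ℝ}

theorem intervalIntegral_comp_sub_left (hv : Periodic v T) (x : ℝ) :
    ∫ y in (0 : ℝ)..T, v (x - y) = ∫ y in (0 : ℝ)..T, v y := by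
  rw [intervalIntegral.integral_comp_sub_left v x, sub_zero]
  simpa using hv.intervalIntegral_add_eq (x - T) 0

theorem intervalIntegral_mul_deriv_comp_sub {u u' v' : ℝ → ℝ} (hv : Periodic v T)
    (hu : ∀ y ∈ uIcc 0 T, HasDerivAt u (u' y) y) (huT : u T = u 0)
    (hu' : IntervalIntegrable u' volume 0 T) (hvv' : ∀ t, HasDerivAt v (v' t) t)
    (hv' : Continuous v') (x : ℝ) :
    ∫ y in (0 : ℝ)..T, u y * v' (x - y) = ∫ y in (0 : ℝ)..T, u' y * v (x - y) := by
  have hderiv (y : ℝ) : HasDerivAt (fun y ↦ -v (x - y)) (v' (x - y)) y := by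
    simpa only [neg_neg] using ((hvv' (x - y)).comp_const_sub x y).fun_neg
  have hint : IntervalIntegrable (fun y ↦ v' (x - y)) volume 0 T :=
    (hv'.comp (continuous_sub_left x)).intervalIntegrable 0 T
  rw [intervalIntegral.integral_mul_deriv_eq_deriv_mul hu (fun y _ ↦ hderiv y) hu' hint, huT,
    hv.sub_eq, sub_zero]
  simp only [mul_neg, intervalIntegral.integral_neg]
  ring

end Function.Periodic

/-- The formula for `K` on `[0, 1]`, used on all of `ℝ`: this is not the periodic kernel. -/
noncomputable def resolventKernel (y : ℝ) : ℝ :=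
  (exp y + exp (1 - y)) / (2 * (exp 1 - 1))

noncomputable def resolventKernelDeriv (y : ℝ) : ℝ :=
  (exp y - exp (1 - y)) / (2 * (exp 1 - 1))

theorem hasDerivAt_resolventKernel (y : ℝ) :
    HasDerivAt resolventKernel (resolventKernelDeriv y) y := by
  have h : HasDerivAt (fun y ↦ exp y + exp (1 - y)) (exp y - exp (1 - y)) y := by
    simpa only [← sub_eq_add_neg] using
      (hasDerivAt_exp y).fun_add ((hasDerivAt_exp (1 - y)).comp_const_sub 1 y)
  exact h.div_const _

theorem resolventKernel_one : resolventKernel 1 = resolventKernel 0 := by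
  rw [resolventKernel, resolventKernel, sub_self, sub_zero, add_comm]

theorem continuous_resolventKernelDeriv : Continuous resolventKernelDeriv := by
  unfold resolventKernelDeriv
  fun_prop

theorem abs_resolventKernelDeriv_le {y : ℝ} (hy : y ∈ Icc (0 : ℝ) 1) :
    |resolventKernelDeriv y| ≤ 1 / 2 := by
  have he : 0 < exp 1 - 1 := by linarith [add_one_lt_exp one_ne_zero]
  have h₁ : 1 ≤ exp y := one_le_exp hy.1
  have h₂ : exp y ≤ exp 1 := exp_le_exp.2 hy.2
  have h₃ : 1 ≤ exp (1 - y) := one_le_exp (by linarith [hy.2])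
  have h₄ : exp (1 - y) ≤ exp 1 := exp_le_exp.2 (by linarith [hy.1])
  rw [resolventKernelDeriv, abs_div, abs_of_pos (by linarith : (0 : ℝ) < 2 * (exp 1 - 1)),
    div_le_iff₀ (by linarith), abs_sub_le_iff]
  constructor <;> linarith

theorem integral_sq_resolventKernelDeriv_le :
    ∫ y in (0 : ℝ)..1, resolventKernelDeriv y ^ 2 ≤ 1 / 4 := by
  have hpt : ∀ y ∈ Icc (0 : ℝ) 1, resolventKernelDeriv y ^ 2 ≤ 1 / 4 := fun y hy ↦ by
    rw [← sq_abs]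
    nlinarith [abs_resolventKernelDeriv_le hy, abs_nonneg (resolventKernelDeriv y)]
  calc ∫ y in (0 : ℝ)..1, resolventKernelDeriv y ^ 2 ≤ ∫ _ in (0 : ℝ)..1, (1 / 4 : ℝ) :=
        intervalIntegral.integral_mono_on zero_le_one
          ((continuous_resolventKernelDeriv.pow 2).intervalIntegrable 0 1)
          intervalIntegrable_const hpt
    _ = 1 / 4 := by simp

theorem abs_integral_kernel_convolution_le (w w' : ℝ → ℝ)
    (hderiv : ∀ x : ℝ, HasDerivAt w (w' x) x) (hw' : Continuous w')
    (hper : ∀ x : ℝ, w (x + 1) = w x) (x : ℝ) :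
    |∫ y in (0:ℝ)..1,
        ((Real.exp y + Real.exp (1 - y)) / (2 * (Real.exp 1 - 1))) * w' (x - y)|
      ≤ Real.sqrt (∫ y in (0:ℝ)..1, (w y) ^ 2) := by
  have hw : Continuous w := continuous_iff_continuousAt.2 fun t ↦ (hderiv t).continuousAt
  have hparts : ∫ y in (0 : ℝ)..1, resolventKernel y * w' (x - y)
      = ∫ y in (0 : ℝ)..1, resolventKernelDeriv y * w (x - y) :=
    Function.Periodic.intervalIntegral_mul_deriv_comp_sub hper
      (fun y _ ↦ hasDerivAt_resolventKernel y) resolventKernel_one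
      (continuous_resolventKernelDeriv.intervalIntegrable 0 1) hderiv hw' x
  have hshift : ∫ y in (0 : ℝ)..1, w (x - y) ^ 2 = ∫ y in (0 : ℝ)..1, w y ^ 2 :=
    Function.Periodic.intervalIntegral_comp_sub_left (v := fun t ↦ w t ^ 2)
      (fun t ↦ by simp only [hper t]) x
  calc |∫ y in (0 : ℝ)..1, resolventKernel y * w' (x - y)|
      = |∫ y in (0 : ℝ)..1, resolventKernelDeriv y * w (x - y)| := by rw [hparts]
    _ ≤ √(∫ y in (0 : ℝ)..1, resolventKernelDeriv y ^ 2) *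
          √(∫ y in (0 : ℝ)..1, w (x - y) ^ 2) :=
        abs_intervalIntegral_mul_le_sqrt_mul_sqrt zero_le_one
          continuous_resolventKernelDeriv.continuousOn
          (hw.comp (continuous_sub_left x)).continuousOn
    _ ≤ 1 * √(∫ y in (0 : ℝ)..1, w y ^ 2) := by
        rw [hshift]
        gcongr
        exact sqrt_le_one.2 (integral_sq_resolventKernelDeriv_le.trans (by norm_num))
    _ = √(∫ y in (0 : ℝ)..1, w y ^ 2) := one_mul _
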